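/- Let n ≥ 1 and let C be a relation on Fin n whose 'conflict digraph' contains c pairwise vertex-disjoint directed cycles. Then for any bijection t : Fin n → Fin n and any b : Fin n → Bool satisfying (C i j ∧ t i < t j) → b i = true, the number of indices i with b i = true is at least c. -/
import Mathlib


theorem stmt15 {n c : ℕ} (hn : 1 ≤ n) (C : Fin n → Fin n → Prop)
    (L : Fin c → ℕ) (hL : ∀ a, 2 ≤ L a)
    (f : (a : Fin c) → Fin (L a) → Fin n)
    (hinj : ∀ a, Function.Injective (f a))
    (hdisj : ∀ a a' : Fin c, a ≠ a' →
      ∀ (m : Fin (L a)) (m' : Fin (L a')), f a m ≠ f a' m')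
    (hcyc : ∀ (a : Fin c) (m : Fin (L a)),
      C (f a m) (f a ⟨(m.val + 1) % L a, Nat.mod_lt _ (by have := hL a; omega)⟩)) :
    ∀ (t : Fin n → Fin n), Function.Bijective t →
      ∀ b : Fin n → Bool, (∀ i j, C i j → t i < t j → b i = true) →
        c ≤ (Finset.univ.filter (fun i => b i = true)).card := by
  intro t ht b hb
  -- for each cycle, pick the vertex minimizing t
  have hex : ∀ a : Fin c, ∃ m : Fin (L a), ∀ m', t (f a m) ≤ t (f a m') := by
    intro a
    have hne : (Finset.univ : Finset (Fin (L a))).Nonempty :=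
      ⟨⟨0, by have := hL a; omega⟩, Finset.mem_univ _⟩
    obtain ⟨m, -, hm⟩ := Finset.exists_min_image Finset.univ (fun m => t (f a m)) hne
    exact ⟨m, fun m' => hm m' (Finset.mem_univ _)⟩
  choose g hg using hex
  have hmem : ∀ a, f a (g a) ∈ Finset.univ.filter (fun i => b i = true) := by
    intro a
    set m := g a
    set m' : Fin (L a) := ⟨(m.val + 1) % L a, Nat.mod_lt _ (by have := hL a; omega)⟩
    have hmne : m ≠ m' := by
      have h2 := hL a
      have hlt := m.isLt
      intro h
      have hv : m.val = (m.val + 1) % L a := congrArg Fin.val h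
      rcases Nat.lt_or_ge (m.val + 1) (L a) with h1 | h1
      · rw [Nat.mod_eq_of_lt h1] at hv; omega
      · have heq : m.val + 1 = L a := by omega
        rw [heq, Nat.mod_self] at hv; omega
    have hfne : f a m ≠ f a m' := fun h => hmne (hinj a h)
    have htlt : t (f a m) < t (f a m') := by
      have h1 := hg a m'
      have h2 : t (f a m) ≠ t (f a m') := fun h => hfne (ht.injective h)
      exact lt_of_le_of_ne h1 h2
    have := hb _ _ (hcyc a m) htlt
    simp [this]
  have hginj : Function.Injective (fun a => f a (g a)) := by
    intro a a' h
    by_contra hne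
    exact hdisj a a' hne (g a) (g a') h
  calc c = (Finset.univ : Finset (Fin c)).card := by simp
    _ ≤ _ := Finset.card_le_card_of_injOn (fun a => f a (g a))
        (fun a _ => hmem a) (fun a _ a' _ h => hginj h)
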